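/- Let α, ε ∈ ℝ and let (x,y) ∈ ℝ² satisfy 1 − 3ε²x ≠ 0. Define x̃ = (x + εy − ε²α/2)/(1 − 3ε²x) and ỹ = (y + ε(6x² − α) + 3ε²xy)/(1 − 3ε²x), and assume also 1 − 3ε²x̃ ≠ 0. Then the function I(x,y) = (y² − 4x³ + 2αx + ε²x(y² − 2αx) − ε⁴α²x)/(1 − 3ε²x) is a conserved quantity: I(x̃,ỹ) = I(x,y). -/

import Mathlib

/-!
Write the Kahan–Hirota–Kimura step as `x̃ = X / d`, `ỹ = Y / d` with `d = 1 - 3ε²x` and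
`X`, `Y` polynomial in `(x, y)`. Clearing denominators, `I(x̃, ỹ) = I(x, y)` becomes the polynomial
identity `d³ N(X/d, Y/d) = d · N(x, y) · (d - 3ε²X)` between the numerators `N` of `I`, which
ring normalization verifies.
-/

section Kahan

variable {K : Type*} [Field K] (α ε : K)

def kahanStepX (x y : K) : K := (x + ε * y - ε ^ 2 * α / 2) / (1 - 3 * ε ^ 2 * x)

def kahanStepY (x y : K) : K := (y + ε * (6 * x ^ 2 - α) + 3 * ε ^ 2 * x * y) / (1 - 3 * ε ^ 2 * x)

def kahanIntegralNum (x y : K) : K :=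
  y ^ 2 - 4 * x ^ 3 + 2 * α * x + ε ^ 2 * x * (y ^ 2 - 2 * α * x) - ε ^ 4 * α ^ 2 * x

def kahanIntegralDen (x : K) : K := 1 - 3 * ε ^ 2 * x

def kahanIntegral (x y : K) : K := kahanIntegralNum α ε x y / kahanIntegralDen ε x

variable {α ε} [NeZero (2 : K)]

theorem kahanIntegralNum_step_mul_den {x y : K} (h : kahanIntegralDen ε x ≠ 0) :
    kahanIntegralNum α ε (kahanStepX α ε x y) (kahanStepY α ε x y) * kahanIntegralDen ε x
      = kahanIntegralNum α ε x y * kahanIntegralDen ε (kahanStepX α ε x y) := by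
  unfold kahanIntegralDen at h
  simp only [kahanIntegralNum, kahanIntegralDen, kahanStepX, kahanStepY]
  -- with `d` opaque, `field_simp` clears exactly the powers of `d` and leaves a polynomial identity
  generalize hd : 1 - 3 * ε ^ 2 * x = d at h ⊢
  field_simp
  rw [← hd]
  ring

theorem kahanIntegral_step {x y : K} (h : kahanIntegralDen ε x ≠ 0)
    (ht : kahanIntegralDen ε (kahanStepX α ε x y) ≠ 0) :
    kahanIntegral α ε (kahanStepX α ε x y) (kahanStepY α ε x y) = kahanIntegral α ε x y :=
  (div_eq_div_iff ht h).2 (kahanIntegralNum_step_mul_den h)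

end Kahan

/-- Conserved quantity of the Kahan–Hirota–Kimura discretization of the
Weierstrass system `ẋ = y`, `ẏ = 6x² - α`. -/
theorem weierstrass_kahan_integral (α ε x y xt yt : ℝ)
    (hxt : xt = (x + ε * y - ε ^ 2 * α / 2) / (1 - 3 * ε ^ 2 * x))
    (hyt : yt = (y + ε * (6 * x ^ 2 - α) + 3 * ε ^ 2 * x * y) / (1 - 3 * ε ^ 2 * x))
    (h : 1 - 3 * ε ^ 2 * x ≠ 0)
    (ht : 1 - 3 * ε ^ 2 * xt ≠ 0) :
    (yt ^ 2 - 4 * xt ^ 3 + 2 * α * xt + ε ^ 2 * xt * (yt ^ 2 - 2 * α * xt)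
        - ε ^ 4 * α ^ 2 * xt) / (1 - 3 * ε ^ 2 * xt)
      = (y ^ 2 - 4 * x ^ 3 + 2 * α * x + ε ^ 2 * x * (y ^ 2 - 2 * α * x)
        - ε ^ 4 * α ^ 2 * x) / (1 - 3 * ε ^ 2 * x) := by
  subst hxt hyt
  exact kahanIntegral_step h ht
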